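/- Let V be a finite p-group, U ≤ Z(V) a cyclic subgroup of order at least p, and U^p the unique subgroup of U of index p. Then the number of cosets vU ∈ V/U with ⟨v,U⟩ cyclic equals the number of cosets in (V/U^p)/(U/U^p) whose generators together with U/U^p generate a cyclic subgroup of V/U^p, i.e., c(U, V) = c(U/U^p, V/U^p). -/

import Mathlib

/-!
For `v ∈ V` the group `H = ⟨v, U⟩` is an abelian `p`-group because `U` is central. If `H` is
cyclic, so is its image in `V ⧸ U^p`. Conversely, `U^p` consists of `p`-th powers of elements of
`U ≤ H`; so if the image of `g` generates `H ⧸ U^p`, every element of `H ⧸ ⟨g⟩` is a `p`-th power,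
and a finite `p`-group on which `x ↦ x ^ p` is surjective (hence injective) has no element of
order `p`, i.e. is trivial. Thus `H` is cyclic iff its image is, and the third isomorphism theorem
`(V ⧸ U^p) ⧸ (U ⧸ U^p) ≃ V ⧸ U` matches the cosets counted on both sides.
-/

open Subgroup QuotientGroup

namespace IsPGroup

variable {p : ℕ} [Fact p.Prime] {G : Type*} [Group G]

theorem subsingleton_of_surjective_pow [Finite G] (hG : IsPGroup p G)
    (hpow : Function.Surjective fun g : G => g ^ p) : Subsingleton G := by
  refine hG.card_eq_or_dvd.elim (Finite.card_le_one_iff_subsingleton.mp ·.le) fun hdvd => ?_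
  obtain ⟨g, hg⟩ := exists_prime_orderOf_dvd_card' p hdvd
  have hinj := Finite.injective_iff_surjective.mpr hpow
  have : g = 1 := hinj (by simp only [← hg, pow_orderOf_eq_one, one_pow])
  exact ((Fact.out : p.Prime).ne_one (by rw [← hg, this, orderOf_one])).elim

theorem isCyclic_of_isCyclic_range {G Q : Type*} [CommGroup G] [Finite G] [Group Q]
    (hG : IsPGroup p G) (f : G →* Q) (hker : ∀ n ∈ f.ker, ∃ g, g ^ p = n)
    (hf : IsCyclic f.range) : IsCyclic G := by
  obtain ⟨⟨_, g, rfl⟩, hgen⟩ := hf.exists_generator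
  have hpow : Function.Surjective fun q : G ⧸ zpowers g => q ^ p := by
    refine QuotientGroup.mk_surjective.forall.mpr fun x => ?_
    obtain ⟨k, hk⟩ := hgen ⟨f x, x, rfl⟩
    have hk : f g ^ k = f x := congrArg Subtype.val hk
    obtain ⟨y, hy⟩ := hker (g ^ (-k) * x) (by
      rw [MonoidHom.mem_ker, map_mul, map_zpow, ← hk, zpow_neg, inv_mul_cancel])
    refine ⟨y, ?_⟩
    have hg : (g : G ⧸ zpowers g) = 1 := (QuotientGroup.eq_one_iff g).mpr (mem_zpowers g)
    simp only [← QuotientGroup.mk_pow, hy, QuotientGroup.mk_mul, QuotientGroup.mk_zpow, hg,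
      one_zpow, one_mul]
  have := (hG.to_quotient _).subsingleton_of_surjective_pow hpow
  exact isCyclic_iff_exists_zpowers_eq_top.mpr ⟨g, QuotientGroup.subsingleton_iff.mp this⟩

theorem exists_pow_eq_of_mem_of_ne_top [IsCyclic G] [Finite G] (hG : IsPGroup p G)
    {N : Subgroup G} (hN : N ≠ ⊤) {n : G} (hn : n ∈ N) : ∃ g, g ^ p = n := by
  obtain ⟨g, hg⟩ := isCyclic_iff_exists_zpowers_eq_top.mp ‹IsCyclic G›
  obtain ⟨k, rfl⟩ := mem_powers_iff_mem_zpowers.mpr (hg ▸ mem_top n : n ∈ zpowers g)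
  by_cases hpk : p ∣ k
  · obtain ⟨j, rfl⟩ := hpk
    exact ⟨g ^ j, by rw [← pow_mul, mul_comm]⟩
  obtain ⟨m, hm⟩ := iff_orderOf.mp hG g
  have hcop : (orderOf g).Coprime k :=
    hm ▸ ((Nat.Prime.coprime_iff_not_dvd Fact.out).mpr hpk).pow_left m
  have htop : zpowers (g ^ k) = ⊤ := by
    rw [← hg]
    exact eq_of_le_of_card_ge (zpowers_le.mpr (pow_mem (mem_zpowers g) k))
      (by rw [Nat.card_zpowers, Nat.card_zpowers, hcop.orderOf_pow])
  exact absurd (top_le_iff.mp (htop ▸ zpowers_le.mpr hn)) hN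

end IsPGroup

namespace Subgroup

variable {G : Type*} [Group G]

theorem normal_of_le_center {H : Subgroup G} (hH : H ≤ center G) : H.Normal :=
  ⟨fun n hn g => by rwa [mem_center_iff.mp (hH hn) g, mul_inv_cancel_right]⟩

theorem isMulCommutative_sup_of_le_center {H K : Subgroup G} (hH : H ≤ center G)
    [IsMulCommutative K] : IsMulCommutative ↥(H ⊔ K) := by
  refine le_centralizer_iff_isMulCommutative.mp (sup_le (hH.trans (center_le_centralizer _)) ?_)
  rw [le_centralizer_iff]
  exact sup_le (hH.trans (center_le_centralizer _)) (le_centralizer_iff_isMulCommutative.mpr ‹_›)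

theorem sup_zpowers_eq_of_mk_eq {H : Subgroup G} {v w : G} (h : (v : G ⧸ H) = w) :
    H ⊔ zpowers v = H ⊔ zpowers w := by
  have key : ∀ {v w : G}, (v : G ⧸ H) = w → H ⊔ zpowers w ≤ H ⊔ zpowers v := fun {v w} h =>
    sup_le le_sup_left <| zpowers_le.mpr <| by
      rw [← mul_inv_cancel_left v w]
      exact mul_mem (mem_sup_right (mem_zpowers v)) (mem_sup_left (QuotientGroup.eq.mp h))
  exact le_antisymm (key h.symm) (key h)

/-- The set of cosets `vN` such that `⟨v, N⟩` is cyclic; its cardinality is `c(N, G)`. -/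
def cyclicCosets (N : Subgroup G) : Set (G ⧸ N) :=
  {x | ∃ v : G, (v : G ⧸ N) = x ∧ IsCyclic ↥(N ⊔ zpowers v)}

theorem mk_mem_cyclicCosets_iff {N : Subgroup G} {v : G} :
    (v : G ⧸ N) ∈ N.cyclicCosets ↔ IsCyclic ↥(N ⊔ zpowers v) :=
  ⟨fun ⟨_, hw, hc⟩ => sup_zpowers_eq_of_mk_eq hw ▸ hc, fun hc => ⟨v, rfl, hc⟩⟩

open scoped IsMulCommutative in
theorem isCyclic_map_mk'_iff {p : ℕ} [Fact p.Prime] [Finite G] {H N : Subgroup G} [N.Normal]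
    [IsMulCommutative H] (hH : IsPGroup p H) (hN : ∀ n ∈ N, ∃ h ∈ H, h ^ p = n) :
    IsCyclic ↥(H.map (mk' N)) ↔ IsCyclic H := by
  refine ⟨fun hc => hH.isCyclic_of_isCyclic_range ((mk' N).comp H.subtype) ?_ ?_,
    fun _ => isCyclic_of_surjective _ ((mk' N).subgroupMap_surjective H)⟩
  · intro n hn
    obtain ⟨h, hh, hpow⟩ := hN n (by simpa using hn)
    exact ⟨⟨h, hh⟩, Subtype.ext hpow⟩
  · rwa [MonoidHom.range_comp, range_subtype]

theorem card_cyclicCosets_map_mk' {p : ℕ} [Fact p.Prime] [Finite G] (hG : IsPGroup p G)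
    {U Up : Subgroup G} [Up.Normal] (hZ : U ≤ center G) [IsCyclic U] (hUpU : Up ≤ U)
    (hUp : ¬U ≤ Up) :
    Nat.card (U.map (mk' Up)).cyclicCosets = Nat.card U.cyclicCosets := by
  have := normal_of_le_center hZ
  have hpow (n : G) (hn : n ∈ Up) : ∃ u ∈ U, u ^ p = n := by
    obtain ⟨u, hu⟩ := (hG.to_subgroup U).exists_pow_eq_of_mem_of_ne_top
      (mt subgroupOf_eq_top.mp hUp) (n := ⟨n, hUpU hn⟩) (mem_subgroupOf.mpr hn)
    exact ⟨u, u.2, congrArg Subtype.val hu⟩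
  refine Nat.card_congr ((quotientQuotientEquivQuotient Up U hUpU).toEquiv.subtypeEquiv ?_)
  intro y
  obtain ⟨w, rfl⟩ := QuotientGroup.mk_surjective y
  obtain ⟨v, rfl⟩ := QuotientGroup.mk_surjective w
  have := isMulCommutative_sup_of_le_center hZ (K := zpowers v)
  show _ ↔ (v : G ⧸ U) ∈ U.cyclicCosets
  rw [mk_mem_cyclicCosets_iff, mk_mem_cyclicCosets_iff, ← mk'_apply, ← MonoidHom.map_zpowers,
    ← map_sup, isCyclic_map_mk'_iff (hG.to_subgroup _)
      fun n hn => (hpow n hn).imp fun u hu => ⟨mem_sup_left hu.1, hu.2⟩]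

end Subgroup

theorem artin_stmt15_general {V : Type*} [Group V] [Finite V] {p : ℕ}
    (hp : p.Prime) (hV : IsPGroup p V)
    (U : Subgroup V) (hZ : U ≤ Subgroup.center V) (hUc : IsCyclic U)
    (Up : Subgroup V) [Up.Normal] (hUpU : Up ≤ U) (hUpidx : Up.relIndex U = p) :
    Nat.card {x : V ⧸ U | ∃ v : V, QuotientGroup.mk v = x ∧
        IsCyclic ↥(U ⊔ Subgroup.zpowers v)} =
      Nat.card {y : (V ⧸ Up) ⧸ (U.map (QuotientGroup.mk' Up)) |
        ∃ w : V ⧸ Up, QuotientGroup.mk w = y ∧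
          IsCyclic ↥((U.map (QuotientGroup.mk' Up)) ⊔ Subgroup.zpowers w)} := by
  have := Fact.mk hp
  have hUp : ¬U ≤ Up := fun h => hp.ne_one (hUpidx ▸ relIndex_eq_one.mpr h)
  exact (card_cyclicCosets_map_mk' hV hZ hUpU hUp).symm

theorem artin_stmt15 {V : Type*} [Group V] [Finite V] {p : ℕ}
    (hp : p.Prime) (hV : IsPGroup p V)
    (U : Subgroup V) (hZ : U ≤ Subgroup.center V) (hUc : IsCyclic U)
    (hUp : p ∣ Nat.card U)
    (Up : Subgroup V) [Up.Normal] (hUpU : Up ≤ U) (hUpidx : Up.relIndex U = p) :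
    Nat.card {x : V ⧸ U | ∃ v : V, QuotientGroup.mk v = x ∧
        IsCyclic ↥(U ⊔ Subgroup.zpowers v)} =
      Nat.card {y : (V ⧸ Up) ⧸ (U.map (QuotientGroup.mk' Up)) |
        ∃ w : V ⧸ Up, QuotientGroup.mk w = y ∧
          IsCyclic ↥((U.map (QuotientGroup.mk' Up)) ⊔ Subgroup.zpowers w)} :=
  artin_stmt15_general hp hV U hZ hUc Up hUpU hUpidx
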